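/- The generating functions g₁ = 1, g₂ = tan(x)·sin(u) − u_x·cos(u), g₃ = tan(x)·cos(u) + u_x·sin(u) satisfy the so(3) commutation relations under the contact bracket: [g₁,g₂] = g₃, [g₁,g₃] = −g₂, [g₂,g₃] = g₁. -/

import Mathlib

/-!
Bracketing with the constant `1` is `∂_u`, which rotates the pair `(g₂, g₃)`: `∂_u g₂ = g₃` and
`∂_u g₃ = -g₂`. With `s = sin u`, `c = cos u`, the remaining bracket is
`[g₂, g₃] = q (s g₃ - c g₂) + sec² x - (g₂² + g₃²) = q² + sec² x - (tan² x + q²) = 1`.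
-/

/-- Partial derivative in direction `i` of a function on `ℝ⁵ = Fin 5 → ℝ`.
Coordinates: 0 = t, 1 = x, 2 = u, 3 = p (= u_t), 4 = q (= u_x). -/
noncomputable def pd (i : Fin 5) (f : (Fin 5 → ℝ) → ℝ) (v : Fin 5 → ℝ) : ℝ :=
  fderiv ℝ f v (Pi.single i 1)

/-- The contact bracket of two generating functions. -/
noncomputable def cbracket (f g : (Fin 5 → ℝ) → ℝ) (v : Fin 5 → ℝ) : ℝ :=
  (pd 3 g v * pd 2 f v - pd 3 f v * pd 2 g v) * v 3
  + (pd 4 g v * pd 2 f v - pd 4 f v * pd 2 g v) * v 4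
  + pd 3 g v * pd 0 f v - pd 3 f v * pd 0 g v
  + pd 4 g v * pd 1 f v - pd 4 f v * pd 1 g v
  + f v * pd 2 g v - g v * pd 2 f v

open Real

lemma pd_eq_of_hasFDerivAt {f : (Fin 5 → ℝ) → ℝ} {f' : (Fin 5 → ℝ) →L[ℝ] ℝ}
    {v : Fin 5 → ℝ} (h : HasFDerivAt f f' v) (i : Fin 5) :
    pd i f v = f' (Pi.single i 1) := by
  rw [pd, h.fderiv]

lemma pd_const (i : Fin 5) (c : ℝ) (v : Fin 5 → ℝ) : pd i (fun _ => c) v = 0 := by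
  rw [pd, fderiv_const_apply]
  rfl

lemma cbracket_const_left (c : ℝ) (g : (Fin 5 → ℝ) → ℝ) (v : Fin 5 → ℝ) :
    cbracket (fun _ => c) g v = c * pd 2 g v := by
  simp only [cbracket, pd_const]
  ring

lemma hasDerivAt_tan_one_add_tan_sq {x : ℝ} (hx : cos x ≠ 0) :
    HasDerivAt tan (1 + tan x ^ 2) x := by
  simpa [← inv_one_add_tan_sq hx] using hasDerivAt_tan hx

noncomputable def so3GenSin (w : Fin 5 → ℝ) : ℝ := tan (w 1) * sin (w 2) - w 4 * cos (w 2)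

noncomputable def so3GenCos (w : Fin 5 → ℝ) : ℝ := tan (w 1) * cos (w 2) + w 4 * sin (w 2)

section Gradients

variable (v : Fin 5 → ℝ) (hv : cos (v 1) ≠ 0)
include hv

lemma pd_so3GenSin (i : Fin 5) :
    pd i so3GenSin v = ![0, sin (v 2) * (1 + tan (v 1) ^ 2), so3GenCos v, 0, -cos (v 2)] i := by
  have hx := (hasDerivAt_tan_one_add_tan_sq hv).comp_hasFDerivAt v (hasFDerivAt_apply (𝕜 := ℝ) 1 v)
  have hu := hasFDerivAt_apply (𝕜 := ℝ) 2 v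
  have hq := hasFDerivAt_apply (𝕜 := ℝ) 4 v
  have h := (hx.mul ((hasDerivAt_sin (v 2)).comp_hasFDerivAt v hu)).sub
    (hq.mul ((hasDerivAt_cos (v 2)).comp_hasFDerivAt v hu))
  rw [pd_eq_of_hasFDerivAt (f := so3GenSin) h]
  fin_cases i <;> simp [so3GenCos]

lemma pd_so3GenCos (i : Fin 5) :
    pd i so3GenCos v = ![0, cos (v 2) * (1 + tan (v 1) ^ 2), -so3GenSin v, 0, sin (v 2)] i := by
  have hx := (hasDerivAt_tan_one_add_tan_sq hv).comp_hasFDerivAt v (hasFDerivAt_apply (𝕜 := ℝ) 1 v)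
  have hu := hasFDerivAt_apply (𝕜 := ℝ) 2 v
  have hq := hasFDerivAt_apply (𝕜 := ℝ) 4 v
  have h := (hx.mul ((hasDerivAt_cos (v 2)).comp_hasFDerivAt v hu)).add
    (hq.mul ((hasDerivAt_sin (v 2)).comp_hasFDerivAt v hu))
  rw [pd_eq_of_hasFDerivAt (f := so3GenCos) h]
  fin_cases i <;> simp [so3GenSin, neg_add_eq_sub]

end Gradients

lemma cbracket_so3GenSin_so3GenCos (v : Fin 5 → ℝ) (hv : cos (v 1) ≠ 0) :
    cbracket so3GenSin so3GenCos v = 1 := by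
  simp only [cbracket, pd_so3GenSin v hv, pd_so3GenCos v hv, Matrix.cons_val, so3GenSin,
    so3GenCos]
  linear_combination sin_sq_add_cos_sq (v 2)

/-- ⟨1, tan x·sin u − u_x·cos u, tan x·cos u + u_x·sin u⟩ realizes so(3)
on the set where cos x ≠ 0. -/
theorem so3_realization (v : Fin 5 → ℝ) (hv : Real.cos (v 1) ≠ 0) :
    cbracket (fun _ => (1 : ℝ))
        (fun w => Real.tan (w 1) * Real.sin (w 2) - w 4 * Real.cos (w 2)) v
      = Real.tan (v 1) * Real.cos (v 2) + v 4 * Real.sin (v 2) ∧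
    cbracket (fun _ => (1 : ℝ))
        (fun w => Real.tan (w 1) * Real.cos (w 2) + w 4 * Real.sin (w 2)) v
      = - (Real.tan (v 1) * Real.sin (v 2) - v 4 * Real.cos (v 2)) ∧
    cbracket (fun w => Real.tan (w 1) * Real.sin (w 2) - w 4 * Real.cos (w 2))
        (fun w => Real.tan (w 1) * Real.cos (w 2) + w 4 * Real.sin (w 2)) v
      = 1 := by
  refine ⟨?_, ?_, cbracket_so3GenSin_so3GenCos v hv⟩
  · exact (cbracket_const_left 1 _ v).trans ((one_mul _).trans (pd_so3GenSin v hv 2))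
  · exact (cbracket_const_left 1 _ v).trans ((one_mul _).trans (pd_so3GenCos v hv 2))
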